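/- arXiv:2508.05566 — 4 statements merged into one kernel-verified Lean document; each statement's English description precedes it below -/
import Mathlib

section
/- Let (E, P, ϑ) be a complete bipolar metric space and let F : E ∪ P → E ∪ P be a covariant polynomial contraction (i.e., F(E) ⊆ E, F(P) ⊆ P, and there exist π ∈ (0,1), σ ≥ 1, and maps q_υ : E × P → [0,∞) for υ = 0,…,σ such that Σ_{υ=0}^{σ} q_υ(Fe, Ff)·ϑ(Fe, Ff)^υ ≤ π·Σ_{υ=0}^{σ} q_υ(e, f)·ϑ(e, f)^υ for all e ∈ E, f ∈ P). If F is continuous and there exist ϱ ∈ {1,…,σ} and Q_ϱ > 0 with q_ϱ(e, f) ≥ Q_ϱ for all e ∈ E, f ∈ P, then F has a unique fixed point in E ∩ P, and for every g₀ ∈ E the Picard sequence g_{κ+1} = F g_κ converges to this fixed point. -/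
open Filter Topology MeasureTheory

/-- A bipolar metric space on a carrier type `α`: two poles `E`, `P` and a
distance `d` defined (meaningfully) on `E × P`. -/
structure BipolarMS (α : Type*) where
  E : Set α
  P : Set α
  hE : E.Nonempty
  hP : P.Nonempty
  d : α → α → ℝ
  nonneg : ∀ e ∈ E, ∀ f ∈ P, 0 ≤ d e f
  eq_iff : ∀ e ∈ E ∩ P, ∀ f ∈ E ∩ P, (d e f = 0 ↔ e = f)
  symm : ∀ e ∈ E ∩ P, ∀ f ∈ E ∩ P, d e f = d f e
  tri : ∀ e ∈ E, ∀ r ∈ E, ∀ z ∈ P, ∀ f ∈ P, d e f ≤ d e z + d r z + d r f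

namespace BipolarMS

variable {α : Type*}

/-- Completeness: every Cauchy bisequence biconverges to a common point of `E ∩ P`. -/
def IsComplete (B : BipolarMS α) : Prop :=
  ∀ g h : ℕ → α, (∀ n, g n ∈ B.E) → (∀ n, h n ∈ B.P) →
    Tendsto (fun p : ℕ × ℕ => B.d (g p.1) (h p.2)) atTop (𝓝 0) →
    ∃ x ∈ B.E ∩ B.P,
      Tendsto (fun n => B.d (g n) x) atTop (𝓝 0) ∧
      Tendsto (fun n => B.d x (h n)) atTop (𝓝 0)

/-- A covariant map preserves the poles. -/
def Covariant (B : BipolarMS α) (F : α → α) : Prop :=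
  (∀ e ∈ B.E, F e ∈ B.E) ∧ (∀ f ∈ B.P, F f ∈ B.P)

/-- A contravariant map swaps the poles. -/
def Contravariant (B : BipolarMS α) (F : α → α) : Prop :=
  (∀ e ∈ B.E, F e ∈ B.P) ∧ (∀ f ∈ B.P, F f ∈ B.E)

/-- Sequential continuity of a covariant map. -/
def SeqContinuous (B : BipolarMS α) (F : α → α) : Prop :=
  ∀ g h : ℕ → α, (∀ n, g n ∈ B.E) → (∀ n, h n ∈ B.P) →
    Tendsto (fun n => B.d (g n) (h n)) atTop (𝓝 0) →
    Tendsto (fun n => B.d (F (g n)) (F (h n))) atTop (𝓝 0)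

/-- Sequential continuity of a contravariant map. -/
def ContraSeqContinuous (B : BipolarMS α) (F : α → α) : Prop :=
  ∀ g h : ℕ → α, (∀ n, g n ∈ B.E) → (∀ n, h n ∈ B.P) →
    Tendsto (fun n => B.d (g n) (h n)) atTop (𝓝 0) →
    Tendsto (fun n => B.d (F (h n)) (F (g n))) atTop (𝓝 0)

/-- Picard-continuity. -/
def PicardContinuous (B : BipolarMS α) (F : α → α) : Prop :=
  ∀ g ∈ B.E, ∀ h ∈ B.P,
    Tendsto (fun κ => B.d (F^[κ] g) h) atTop (𝓝 0) →
    Tendsto (fun κ => B.d (F (F^[κ] g)) (F h)) atTop (𝓝 0)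

/-- Polynomial contraction condition for a covariant map. -/
def IsPolyContraction (B : BipolarMS α) (F : α → α) (π : ℝ) (σ : ℕ)
    (q : ℕ → α → α → ℝ) : Prop :=
  ∀ e ∈ B.E, ∀ f ∈ B.P,
    ∑ υ ∈ Finset.range (σ + 1), q υ (F e) (F f) * B.d (F e) (F f) ^ υ ≤
      π * ∑ υ ∈ Finset.range (σ + 1), q υ e f * B.d e f ^ υ

/-- Polynomial contraction condition for a contravariant map
(`F f ∈ E`, `F e ∈ P`). -/
def IsContraPolyContraction (B : BipolarMS α) (F : α → α) (π : ℝ) (σ : ℕ)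
    (q : ℕ → α → α → ℝ) : Prop :=
  ∀ e ∈ B.E, ∀ f ∈ B.P,
    ∑ υ ∈ Finset.range (σ + 1), q υ (F f) (F e) * B.d (F f) (F e) ^ υ ≤
      π * ∑ υ ∈ Finset.range (σ + 1), q υ e f * B.d e f ^ υ

/-- Almost polynomial contraction condition for a covariant map. -/
def IsAlmostPolyContraction (B : BipolarMS α) (F : α → α) (π : ℝ) (σ : ℕ)
    (q : ℕ → α → α → ℝ) (H : ℕ → ℝ) : Prop :=
  ∀ e ∈ B.E, ∀ f ∈ B.P,
    ∑ υ ∈ Finset.range (σ + 1), q υ (F e) (F f) * B.d (F e) (F f) ^ υ ≤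
      π * ∑ υ ∈ Finset.range (σ + 1),
        q υ e f * (B.d e f ^ υ + H υ * B.d (F e) f ^ υ)

end BipolarMS

/-!
Write `S(e, f) = ∑ q_υ(e, f) ϑ(e, f)^υ`. The contraction gives `S(Fⁿe, Fⁿf) ≤ πⁿ S(e, f)`, and the
lower bound on `q_ϱ` gives `Q ϑ^ϱ ≤ S`, so `ϑ(Fⁿe, Fⁿf) ≤ M rⁿ` with `r = π^{1/ϱ} < 1`. Geometric
decay of `ϑ` along all Picard bisequences is all that is needed afterwards: three applications of the
quadrilateral inequality make the Picard bisequence Cauchy, its biconvergence limit is fixed by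
continuity, and the same decay gives uniqueness and convergence of every Picard sequence.
-/

namespace BipolarMS

variable {α : Type*} {B : BipolarMS α} {F : α → α}

theorem Covariant.iterate_mem_E (hcov : B.Covariant F) {e : α} (he : e ∈ B.E) (n : ℕ) :
    F^[n] e ∈ B.E :=
  Set.MapsTo.iterate (f := F) hcov.1 n he

theorem Covariant.iterate_mem_P (hcov : B.Covariant F) {f : α} (hf : f ∈ B.P) (n : ℕ) :
    F^[n] f ∈ B.P :=
  Set.MapsTo.iterate (f := F) hcov.2 n hf

theorem eq_of_tendsto_d {g : ℕ → α} (hg : ∀ n, g n ∈ B.E) {x y : α} (hx : x ∈ B.E ∩ B.P)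
    (hy : y ∈ B.E ∩ B.P) (hgx : Tendsto (fun n => B.d (g n) x) atTop (𝓝 0))
    (hgy : Tendsto (fun n => B.d (g n) y) atTop (𝓝 0)) : x = y := by
  have hxx : B.d x x = 0 := (B.eq_iff x hx x hx).2 rfl
  have hbound : ∀ n, B.d x y ≤ B.d (g n) x + B.d (g n) y := fun n => by
    linarith [B.tri x hx.1 (g n) (hg n) x hx.2 y hy.2]
  have hxy : B.d x y ≤ 0 := ge_of_tendsto' (by simpa using hgx.add hgy) hbound
  exact (B.eq_iff x hx y hy).1 (le_antisymm hxy (B.nonneg x hx.1 y hy.2))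

section Geometric

variable {g h : ℕ → α} {c r : ℝ}

theorem d_le_geometric_min (hg : ∀ n, g n ∈ B.E) (hh : ∀ n, h n ∈ B.P) (hr0 : 0 ≤ r)
    (hr1 : r < 1) (hdiag : ∀ n, B.d (g n) (h n) ≤ c * r ^ n)
    (hsucc_left : ∀ n, B.d (g (n + 1)) (h n) ≤ c * r ^ n)
    (hsucc_right : ∀ n, B.d (g n) (h (n + 1)) ≤ c * r ^ n) (m n : ℕ) :
    B.d (g m) (h n) ≤ 2 * c / (1 - r) * r ^ min m n := by
  have hc : 0 ≤ c := by simpa using (B.nonneg _ (hg 0) _ (hh 0)).trans (hdiag 0)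
  set D := 2 * c / (1 - r)
  have hD : D * (1 - r) = 2 * c := div_mul_cancel₀ _ (by linarith)
  have hcD : c ≤ D := by nlinarith
  -- `D` is chosen so that the geometric tail `D r^{k+1}` absorbs the two steps `c r^k`
  have step : ∀ k, c * r ^ k + c * r ^ k + D * r ^ (k + 1) = D * r ^ k := fun k => by
    linear_combination (-(r ^ k)) * hD
  have hdiag' : ∀ k, B.d (g k) (h k) ≤ D * r ^ k := fun k =>
    (hdiag k).trans (mul_le_mul_of_nonneg_right hcD (pow_nonneg hr0 k))
  have right : ∀ j k, B.d (g k) (h (k + j)) ≤ D * r ^ k := by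
    intro j
    induction j with
    | zero => exact hdiag'
    | succ j ih =>
      intro k
      have htail := ih (k + 1)
      rw [show k + 1 + j = k + (j + 1) by omega] at htail
      linarith [B.tri _ (hg k) _ (hg (k + 1)) _ (hh k) _ (hh (k + (j + 1))), hdiag k,
        hsucc_left k, step k]
  have left : ∀ j k, B.d (g (k + j)) (h k) ≤ D * r ^ k := by
    intro j
    induction j with
    | zero => exact hdiag'
    | succ j ih =>
      intro k
      have htail := ih (k + 1)
      rw [show k + 1 + j = k + (j + 1) by omega] at htail
      linarith [B.tri _ (hg (k + (j + 1))) _ (hg k) _ (hh (k + 1)) _ (hh k), hdiag k,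
        hsucc_right k, step k]
  rcases le_total m n with hmn | hnm
  · simpa [min_eq_left hmn, Nat.add_sub_cancel' hmn] using right (n - m) m
  · simpa [min_eq_right hnm, Nat.add_sub_cancel' hnm] using left (m - n) n

theorem tendsto_d_prod_of_le_geometric (hg : ∀ n, g n ∈ B.E) (hh : ∀ n, h n ∈ B.P)
    (hr0 : 0 ≤ r) (hr1 : r < 1) (hdiag : ∀ n, B.d (g n) (h n) ≤ c * r ^ n)
    (hsucc_left : ∀ n, B.d (g (n + 1)) (h n) ≤ c * r ^ n)
    (hsucc_right : ∀ n, B.d (g n) (h (n + 1)) ≤ c * r ^ n) :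
    Tendsto (fun p : ℕ × ℕ => B.d (g p.1) (h p.2)) atTop (𝓝 0) := by
  have hmin : Tendsto (fun p : ℕ × ℕ => min p.1 p.2) atTop atTop :=
    tendsto_atTop_atTop.2 fun b => ⟨(b, b), fun p hp => le_min hp.1 hp.2⟩
  have hlim := ((tendsto_pow_atTop_nhds_zero_of_lt_one hr0 hr1).comp hmin).const_mul
    (2 * c / (1 - r))
  rw [mul_zero] at hlim
  exact squeeze_zero (fun p => B.nonneg _ (hg _) _ (hh _))
    (fun p => d_le_geometric_min hg hh hr0 hr1 hdiag hsucc_left hsucc_right p.1 p.2) hlim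

end Geometric

def HasGeometricIterates (B : BipolarMS α) (F : α → α) (r : ℝ) : Prop :=
  ∀ e ∈ B.E, ∀ f ∈ B.P, ∃ M, ∀ n, B.d (F^[n] e) (F^[n] f) ≤ M * r ^ n

namespace HasGeometricIterates

variable {r : ℝ} (hF : B.HasGeometricIterates F r) (hcov : B.Covariant F) (hr0 : 0 ≤ r)
  (hr1 : r < 1)
include hF hcov hr0 hr1

theorem tendsto_d_iterate {e f : α} (he : e ∈ B.E) (hf : f ∈ B.P) :
    Tendsto (fun n => B.d (F^[n] e) (F^[n] f)) atTop (𝓝 0) := by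
  obtain ⟨M, hM⟩ := hF e he f hf
  have hlim := (tendsto_pow_atTop_nhds_zero_of_lt_one hr0 hr1).const_mul M
  rw [mul_zero] at hlim
  exact squeeze_zero (fun n => B.nonneg _ (hcov.iterate_mem_E he n) _
    (hcov.iterate_mem_P hf n)) hM hlim

theorem tendsto_d_iterate_prod {e f : α} (he : e ∈ B.E) (hf : f ∈ B.P) :
    Tendsto (fun p : ℕ × ℕ => B.d (F^[p.1] e) (F^[p.2] f)) atTop (𝓝 0) := by
  obtain ⟨M₁, hM₁⟩ := hF e he f hf
  obtain ⟨M₂, hM₂⟩ := hF (F e) (hcov.1 e he) f hf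
  obtain ⟨M₃, hM₃⟩ := hF e he (F f) (hcov.2 f hf)
  set c := max (max M₁ M₂) M₃
  have hle : ∀ {M : ℝ} n, M ≤ c → M * r ^ n ≤ c * r ^ n :=
    fun n hM => mul_le_mul_of_nonneg_right hM (pow_nonneg hr0 n)
  refine tendsto_d_prod_of_le_geometric (hcov.iterate_mem_E he) (hcov.iterate_mem_P hf) hr0 hr1
    (fun n => (hM₁ n).trans (hle n (by simp [c]))) (fun n => ?_) (fun n => ?_)
  · rw [Function.iterate_succ_apply]
    exact (hM₂ n).trans (hle n (by simp [c]))
  · rw [Function.iterate_succ_apply]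
    exact (hM₃ n).trans (hle n (by simp [c]))

theorem exists_fixedPoint (hcomp : B.IsComplete) (hcont : B.SeqContinuous F) :
    ∃ x ∈ B.E ∩ B.P, F x = x := by
  obtain ⟨e, he⟩ := B.hE
  obtain ⟨f, hf⟩ := B.hP
  have hgE := hcov.iterate_mem_E he
  obtain ⟨x, hx, hgx, -⟩ := hcomp _ _ hgE (hcov.iterate_mem_P hf)
    (hF.tendsto_d_iterate_prod hcov hr0 hr1 he hf)
  have hFgFx : Tendsto (fun n => B.d (F^[n + 1] e) (F x)) atTop (𝓝 0) := by
    simpa only [Function.iterate_succ_apply'] using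
      hcont _ (fun _ => x) hgE (fun _ => hx.2) hgx
  exact ⟨x, hx, eq_of_tendsto_d (fun n => hgE (n + 1)) hx ⟨hcov.1 x hx.1, hcov.2 x hx.2⟩
    (hgx.comp (tendsto_add_atTop_nat 1)) hFgFx |>.symm⟩

theorem eq_of_fixedPoint {x y : α} (hx : x ∈ B.E ∩ B.P) (hy : y ∈ B.E ∩ B.P) (hFx : F x = x)
    (hFy : F y = y) : x = y := by
  have hlim := hF.tendsto_d_iterate hcov hr0 hr1 hx.1 hy.2
  simp only [Function.iterate_fixed hFx, Function.iterate_fixed hFy] at hlim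
  exact (B.eq_iff x hx y hy).1 (tendsto_nhds_unique tendsto_const_nhds hlim)

theorem tendsto_d_iterate_fixedPoint {x : α} (hx : x ∈ B.P) (hFx : F x = x) {e : α}
    (he : e ∈ B.E) : Tendsto (fun n => B.d (F^[n] e) x) atTop (𝓝 0) := by
  simpa only [Function.iterate_fixed hFx] using hF.tendsto_d_iterate hcov hr0 hr1 he hx

end HasGeometricIterates

theorem le_rpow_inv_mul_rpow_inv_pow {x a π : ℝ} {k n : ℕ} (hx : 0 ≤ x) (ha : 0 ≤ a)
    (hπ : 0 ≤ π) (hk : k ≠ 0) (h : x ^ k ≤ a * π ^ n) :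
    x ≤ a ^ (k : ℝ)⁻¹ * (π ^ (k : ℝ)⁻¹) ^ n := by
  refine (pow_le_pow_iff_left₀ hx (by positivity) hk).1 ?_
  rwa [mul_pow, ← pow_mul, mul_comm n, pow_mul, Real.rpow_inv_natCast_pow ha hk,
    Real.rpow_inv_natCast_pow hπ hk]

section PolyContraction

variable {π : ℝ} {σ : ℕ} {q : ℕ → α → α → ℝ}

def polySum (B : BipolarMS α) (σ : ℕ) (q : ℕ → α → α → ℝ) (e f : α) : ℝ :=
  ∑ υ ∈ Finset.range (σ + 1), q υ e f * B.d e f ^ υ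

theorem mul_pow_le_polySum (hq : ∀ υ, ∀ e ∈ B.E, ∀ f ∈ B.P, 0 ≤ q υ e f) {ϱ : ℕ}
    (hϱσ : ϱ ≤ σ) {e f : α} (he : e ∈ B.E) (hf : f ∈ B.P) :
    q ϱ e f * B.d e f ^ ϱ ≤ B.polySum σ q e f :=
  Finset.single_le_sum (f := fun υ => q υ e f * B.d e f ^ υ)
    (fun υ _ => mul_nonneg (hq υ e he f hf) (pow_nonneg (B.nonneg e he f hf) υ))
    (Finset.mem_range.2 (Nat.lt_succ_of_le hϱσ))

theorem IsPolyContraction.polySum_iterate_le (hPC : B.IsPolyContraction F π σ q)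
    (hcov : B.Covariant F) (hπ : 0 ≤ π) {e f : α} (he : e ∈ B.E) (hf : f ∈ B.P) (n : ℕ) :
    B.polySum σ q (F^[n] e) (F^[n] f) ≤ π ^ n * B.polySum σ q e f := by
  induction n with
  | zero => simp
  | succ n ih =>
    rw [Function.iterate_succ_apply', Function.iterate_succ_apply', pow_succ', mul_assoc]
    exact (hPC _ (hcov.iterate_mem_E he n) _ (hcov.iterate_mem_P hf n)).trans
      (mul_le_mul_of_nonneg_left ih hπ)

theorem IsPolyContraction.hasGeometricIterates (hPC : B.IsPolyContraction F π σ q)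
    (hcov : B.Covariant F) (hπ : 0 ≤ π) (hq : ∀ υ, ∀ e ∈ B.E, ∀ f ∈ B.P, 0 ≤ q υ e f)
    {ϱ : ℕ} (hϱ : ϱ ≠ 0) (hϱσ : ϱ ≤ σ) {Q : ℝ} (hQ : 0 < Q)
    (hlb : ∀ e ∈ B.E, ∀ f ∈ B.P, Q ≤ q ϱ e f) :
    B.HasGeometricIterates F (π ^ (ϱ : ℝ)⁻¹) := by
  intro e he f hf
  refine ⟨(B.polySum σ q e f / Q) ^ (ϱ : ℝ)⁻¹, fun n => ?_⟩
  have heₙ := hcov.iterate_mem_E he n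
  have hfₙ := hcov.iterate_mem_P hf n
  have hdₙ := B.nonneg _ heₙ _ hfₙ
  have hpoly : 0 ≤ B.polySum σ q e f :=
    (mul_nonneg (hq ϱ e he f hf) (pow_nonneg (B.nonneg e he f hf) ϱ)).trans
      (mul_pow_le_polySum hq hϱσ he hf)
  refine le_rpow_inv_mul_rpow_inv_pow hdₙ (div_nonneg hpoly hQ.le) hπ hϱ ?_
  rw [div_mul_eq_mul_div, le_div_iff₀ hQ, mul_comm]
  calc Q * B.d (F^[n] e) (F^[n] f) ^ ϱ
      ≤ q ϱ (F^[n] e) (F^[n] f) * B.d (F^[n] e) (F^[n] f) ^ ϱ :=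
        mul_le_mul_of_nonneg_right (hlb _ heₙ _ hfₙ) (pow_nonneg hdₙ ϱ)
    _ ≤ B.polySum σ q (F^[n] e) (F^[n] f) := mul_pow_le_polySum hq hϱσ heₙ hfₙ
    _ ≤ π ^ n * B.polySum σ q e f := hPC.polySum_iterate_le hcov hπ he hf n
    _ = B.polySum σ q e f * π ^ n := mul_comm _ _

end PolyContraction

end BipolarMS

theorem covariant_polyContraction_fixedPoint_general {α : Type*} (B : BipolarMS α)
    (F : α → α) (hcov : B.Covariant F) (π : ℝ) (hπ : π ∈ Set.Ioo (0:ℝ) 1)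
    (σ : ℕ) (q : ℕ → α → α → ℝ)
    (hq : ∀ υ, ∀ e ∈ B.E, ∀ f ∈ B.P, 0 ≤ q υ e f)
    (hPC : B.IsPolyContraction F π σ q)
    (hcomp : B.IsComplete) (hcont : B.SeqContinuous F)
    (ϱ : ℕ) (hϱ1 : 1 ≤ ϱ) (hϱσ : ϱ ≤ σ) (Q : ℝ) (hQ : 0 < Q)
    (hlb : ∀ e ∈ B.E, ∀ f ∈ B.P, Q ≤ q ϱ e f) :
    (∃! x, x ∈ B.E ∩ B.P ∧ F x = x) ∧
      ∀ x, (x ∈ B.E ∩ B.P ∧ F x = x) →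
        ∀ g₀ ∈ B.E, Filter.Tendsto (fun κ => B.d (F^[κ] g₀) x)
          Filter.atTop (nhds 0) := by
  obtain ⟨hπ0, hπ1⟩ := hπ
  have hgeom := hPC.hasGeometricIterates hcov hπ0.le hq (by omega) hϱσ hQ hlb
  have hr0 : 0 ≤ π ^ (ϱ : ℝ)⁻¹ := by positivity
  have hr1 : π ^ (ϱ : ℝ)⁻¹ < 1 := Real.rpow_lt_one hπ0.le hπ1 (by positivity)
  obtain ⟨x, hx, hFx⟩ := hgeom.exists_fixedPoint hcov hr0 hr1 hcomp hcont
  refine ⟨⟨x, ⟨hx, hFx⟩, fun y hy => hgeom.eq_of_fixedPoint hcov hr0 hr1 hy.1 hx hy.2 hFx⟩, ?_⟩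
  rintro z ⟨hz, hFz⟩ g₀ hg₀
  exact hgeom.tendsto_d_iterate_fixedPoint hcov hr0 hr1 hz.2 hFz hg₀

/-- covariant polynomial contraction fixed point theorem. -/
theorem covariant_polyContraction_fixedPoint {α : Type*} (B : BipolarMS α)
    (F : α → α) (hcov : B.Covariant F) (π : ℝ) (hπ : π ∈ Set.Ioo (0:ℝ) 1)
    (σ : ℕ) (hσ : 1 ≤ σ) (q : ℕ → α → α → ℝ)
    (hq : ∀ υ, ∀ e ∈ B.E, ∀ f ∈ B.P, 0 ≤ q υ e f)
    (hPC : B.IsPolyContraction F π σ q)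
    (hcomp : B.IsComplete) (hcont : B.SeqContinuous F)
    (ϱ : ℕ) (hϱ1 : 1 ≤ ϱ) (hϱσ : ϱ ≤ σ) (Q : ℝ) (hQ : 0 < Q)
    (hlb : ∀ e ∈ B.E, ∀ f ∈ B.P, Q ≤ q ϱ e f) :
    (∃! x, x ∈ B.E ∩ B.P ∧ F x = x) ∧
      ∀ x, (x ∈ B.E ∩ B.P ∧ F x = x) →
        ∀ g₀ ∈ B.E, Filter.Tendsto (fun κ => B.d (F^[κ] g₀) x)
          Filter.atTop (nhds 0) :=
  covariant_polyContraction_fixedPoint_general B F hcov π hπ σ q hq hPC hcomp hcont ϱ hϱ1 hϱσ Q hQ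
    hlb
end

section
/- Let (E, P, ϑ) be a complete bipolar metric space and let F : E ∪ P → E ∪ P be a contravariant polynomial contraction (i.e., F(E) ⊆ P, F(P) ⊆ E, and there exist π ∈ (0,1), σ ≥ 1, and maps q_υ : E × P → [0,∞) with Σ_{υ=0}^{σ} q_υ(Ff, Fe)·ϑ(Ff, Fe)^υ ≤ π·Σ_{υ=0}^{σ} q_υ(e, f)·ϑ(e, f)^υ for all e ∈ E, f ∈ P). If F is continuous and there exist ϱ ∈ {1,…,σ} and Q_ϱ > 0 with q_ϱ(e, f) ≥ Q_ϱ for all e ∈ E, f ∈ P, then F has a unique fixed point. -/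
open Filter Topology MeasureTheory

/-!
Write `S(e, f) = ∑_{υ ≤ σ} q_υ(e, f) ϑ(e, f)^υ`. Contravariance turns the contraction inequality
into `S(F f, F e) ≤ π S(e, f)`, so along the Picard bisequence `S` decays like `π^k`, where `k`
counts the zigzag steps `(g₀, h₀), (g₁, h₀), (g₁, h₁), …`. The single term `Q_ϱ ϑ^ϱ ≤ S`
converts this into `ϑ ≤ C (π^{1/ϱ})^k`, and summing the geometric zigzag with the quadrilateral
inequality shows the bisequence is Cauchy. Its limit is fixed by continuity. Two fixed points
`x, y` satisfy `S(x, y) ≤ π² S(x, y)`, hence `ϑ(x, y) = 0`.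
-/

open Finset

lemma le_rpow_inv_mul_pow_of_pow_le {x a b : ℝ} {ϱ k : ℕ} (hϱ : ϱ ≠ 0) (hx : 0 ≤ x)
    (ha : 0 ≤ a) (hb : 0 ≤ b) (h : x ^ ϱ ≤ a * b ^ k) :
    x ≤ a ^ (ϱ⁻¹ : ℝ) * (b ^ (ϱ⁻¹ : ℝ)) ^ k := by
  rw [Real.rpow_pow_comm hb, ← Real.mul_rpow ha (pow_nonneg hb k),
    Real.le_rpow_inv_iff_of_pos hx (by positivity) (by positivity), Real.rpow_natCast]
  exact h

namespace BipolarMS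

variable {α : Type*} (B : BipolarMS α)

def polyDist (q : ℕ → α → α → ℝ) (σ : ℕ) (e f : α) : ℝ :=
  ∑ υ ∈ range (σ + 1), q υ e f * B.d e f ^ υ

variable {B} {q : ℕ → α → α → ℝ} {σ ϱ : ℕ} {Q π : ℝ} {F : α → α}

lemma polyDist_nonneg {e f : α} (he : e ∈ B.E) (hf : f ∈ B.P) (hq : ∀ υ, 0 ≤ q υ e f) :
    0 ≤ B.polyDist q σ e f :=
  sum_nonneg fun υ _ => mul_nonneg (hq υ) (pow_nonneg (B.nonneg e he f hf) υ)

lemma mul_dist_pow_le_polyDist {e f : α} (he : e ∈ B.E) (hf : f ∈ B.P)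
    (hq : ∀ υ, 0 ≤ q υ e f) (hϱσ : ϱ ≤ σ) (hlb : Q ≤ q ϱ e f) :
    Q * B.d e f ^ ϱ ≤ B.polyDist q σ e f := by
  have hd := B.nonneg e he f hf
  calc Q * B.d e f ^ ϱ ≤ q ϱ e f * B.d e f ^ ϱ := by gcongr
    _ ≤ B.polyDist q σ e f :=
      single_le_sum (fun υ _ => mul_nonneg (hq υ) (pow_nonneg hd υ))
        (mem_range.2 (Nat.lt_succ_of_le hϱσ))

lemma dist_le_of_polyDist_le {e f : α} (he : e ∈ B.E) (hf : f ∈ B.P)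
    (hq : ∀ υ, 0 ≤ q υ e f) (hϱ : ϱ ≠ 0) (hϱσ : ϱ ≤ σ) (hQ : 0 < Q) (hlb : Q ≤ q ϱ e f)
    {A : ℝ} (hA : 0 ≤ A) (hπ : 0 ≤ π) {k : ℕ} (h : B.polyDist q σ e f ≤ A * π ^ k) :
    B.d e f ≤ (A / Q) ^ (ϱ⁻¹ : ℝ) * (π ^ (ϱ⁻¹ : ℝ)) ^ k := by
  refine le_rpow_inv_mul_pow_of_pow_le hϱ (B.nonneg e he f hf) (div_nonneg hA hQ.le) hπ ?_
  rw [div_mul_eq_mul_div, le_div_iff₀ hQ, mul_comm]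
  exact (mul_dist_pow_le_polyDist he hf hq hϱσ hlb).trans h

lemma IsContraPolyContraction.polyDist_le (hPC : B.IsContraPolyContraction F π σ q) {e f : α}
    (he : e ∈ B.E) (hf : f ∈ B.P) : B.polyDist q σ (F f) (F e) ≤ π * B.polyDist q σ e f :=
  hPC e he f hf

lemma IsContraPolyContraction.eq_of_isFixedPt (hPC : B.IsContraPolyContraction F π σ q)
    (hπ₀ : 0 ≤ π) (hπ₁ : π < 1) (hq : ∀ υ, ∀ e ∈ B.E, ∀ f ∈ B.P, 0 ≤ q υ e f) (hϱ : ϱ ≠ 0)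
    (hϱσ : ϱ ≤ σ) (hQ : 0 < Q) (hlb : ∀ e ∈ B.E, ∀ f ∈ B.P, Q ≤ q ϱ e f) {x y : α}
    (hx : x ∈ B.E ∩ B.P) (hy : y ∈ B.E ∩ B.P) (hFx : F x = x) (hFy : F y = y) : x = y := by
  have hqxy : ∀ υ, 0 ≤ q υ x y := fun υ => hq υ x hx.1 y hy.2
  have hyx := hPC.polyDist_le hx.1 hy.2
  have hxy := hPC.polyDist_le hy.1 hx.2
  rw [hFx, hFy] at hyx hxy
  have hS₀ := polyDist_nonneg (σ := σ) hx.1 hy.2 hqxy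
  have hS : B.polyDist q σ x y ≤ 0 := by
    nlinarith [mul_le_mul_of_nonneg_left hyx hπ₀, mul_nonneg hπ₀ hS₀]
  have hd : B.d x y ^ ϱ ≤ 0 := nonpos_of_mul_nonpos_right
    ((mul_dist_pow_le_polyDist hx.1 hy.2 hqxy hϱσ (hlb x hx.1 y hy.2)).trans hS) hQ
  refine (B.eq_iff x hx y hy).1 ((pow_eq_zero_iff hϱ).1 (hd.antisymm ?_))
  exact pow_nonneg (B.nonneg x hx.1 y hy.2) ϱ

lemma eq_of_tendsto_dist {x y : α} (hx : x ∈ B.E ∩ B.P) (hy : y ∈ B.E ∩ B.P) {g h : ℕ → α}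
    (hgE : ∀ n, g n ∈ B.E) (hhP : ∀ n, h n ∈ B.P)
    (hxh : Tendsto (fun n => B.d x (h n)) atTop (𝓝 0))
    (hgh : Tendsto (fun n => B.d (g n) (h n)) atTop (𝓝 0))
    (hgy : Tendsto (fun n => B.d (g n) y) atTop (𝓝 0)) : x = y := by
  have hle : B.d x y ≤ 0 :=
    ge_of_tendsto' (by simpa using (hxh.add hgh).add hgy) fun n =>
      B.tri x hx.1 (g n) (hgE n) (h n) (hhP n) y hy.2
  exact (B.eq_iff x hx y hy).1 (hle.antisymm (B.nonneg x hx.1 y hy.2))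

section Zigzag

variable {g h : ℕ → α} {c : ℕ → ℝ}

lemma dist_le_sum_Ico_of_le (hgE : ∀ n, g n ∈ B.E) (hhP : ∀ n, h n ∈ B.P)
    (hc₀ : ∀ n, B.d (g n) (h n) ≤ c (2 * n)) (hc₁ : ∀ n, B.d (g (n + 1)) (h n) ≤ c (2 * n + 1))
    {m n : ℕ} (hmn : m ≤ n) : B.d (g m) (h n) ≤ ∑ k ∈ Ico (2 * m) (2 * n + 1), c k := by
  induction n, hmn using Nat.le_induction with
  | base => simpa using hc₀ m
  | succ n hmn ih =>
    calc B.d (g m) (h (n + 1))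
        ≤ B.d (g m) (h n) + B.d (g (n + 1)) (h n) + B.d (g (n + 1)) (h (n + 1)) :=
          B.tri _ (hgE m) _ (hgE (n + 1)) _ (hhP n) _ (hhP (n + 1))
      _ ≤ ∑ k ∈ Ico (2 * m) (2 * n + 1), c k + c (2 * n + 1) + c (2 * n + 1 + 1) :=
          add_le_add (add_le_add ih (hc₁ n)) (hc₀ (n + 1))
      _ = ∑ k ∈ Ico (2 * m) (2 * (n + 1) + 1), c k := by
          rw [show 2 * (n + 1) + 1 = 2 * n + 1 + 1 + 1 by ring,
            sum_Ico_succ_top (b := 2 * n + 1 + 1) (by omega),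
            sum_Ico_succ_top (b := 2 * n + 1) (by omega)]

/- Going backwards the quadrilateral inequality crosses the edge `(g m, h m)` twice; the extra
`c (2 * m)` on the left pays for the second crossing. -/
lemma dist_add_le_two_mul_sum_Ico_of_le (hgE : ∀ n, g n ∈ B.E) (hhP : ∀ n, h n ∈ B.P)
    (hc₀ : ∀ n, B.d (g n) (h n) ≤ c (2 * n)) (hc₁ : ∀ n, B.d (g (n + 1)) (h n) ≤ c (2 * n + 1))
    {m n : ℕ} (hnm : n ≤ m) :
    B.d (g m) (h n) + c (2 * m) ≤ 2 * ∑ k ∈ Ico (2 * n) (2 * m + 1), c k := by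
  induction m, hnm using Nat.le_induction with
  | base => simpa [two_mul] using hc₀ n
  | succ m hnm ih =>
    have htri := B.tri _ (hgE (m + 1)) _ (hgE m) _ (hhP m) _ (hhP n)
    have hc_odd : 0 ≤ c (2 * m + 1) := (B.nonneg _ (hgE (m + 1)) _ (hhP m)).trans (hc₁ m)
    have hc_even : 0 ≤ c (2 * m + 1 + 1) :=
      (B.nonneg _ (hgE (m + 1)) _ (hhP (m + 1))).trans (hc₀ (m + 1))
    rw [show 2 * (m + 1) = 2 * m + 1 + 1 by ring, sum_Ico_succ_top (by omega),
      sum_Ico_succ_top (by omega)]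
    linarith [hc₀ m, hc₁ m]

lemma tendsto_dist_of_geometric (hgE : ∀ n, g n ∈ B.E) (hhP : ∀ n, h n ∈ B.P) {C r : ℝ}
    (hC : 0 ≤ C) (hr₀ : 0 ≤ r) (hr₁ : r < 1)
    (hc₀ : ∀ n, B.d (g n) (h n) ≤ C * r ^ (2 * n))
    (hc₁ : ∀ n, B.d (g (n + 1)) (h n) ≤ C * r ^ (2 * n + 1)) :
    Tendsto (fun p : ℕ × ℕ => B.d (g p.1) (h p.2)) atTop (𝓝 0) := by
  set K := C / (1 - r)
  have hK : 0 ≤ K := div_nonneg hC (sub_pos.2 hr₁).le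
  have hgeom (a b : ℕ) : ∑ k ∈ Ico a b, C * r ^ k ≤ K * r ^ a := by
    rw [← mul_sum]
    exact (mul_le_mul_of_nonneg_left (geom_sum_Ico_le_of_lt_one hr₀ hr₁) hC).trans_eq (by ring)
  have hbound (m n : ℕ) : B.d (g m) (h n) ≤ 2 * K * (r ^ 2) ^ min m n := by
    rw [← pow_mul]
    rcases le_total m n with hmn | hnm
    · rw [min_eq_left hmn]
      have := (dist_le_sum_Ico_of_le (c := fun k => C * r ^ k) hgE hhP hc₀ hc₁ hmn).trans
        (hgeom _ _)
      nlinarith [pow_nonneg hr₀ (2 * m)]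
    · rw [min_eq_right hnm]
      have := dist_add_le_two_mul_sum_Ico_of_le (c := fun k => C * r ^ k) hgE hhP hc₀ hc₁ hnm
      nlinarith [hgeom (2 * n) (2 * m + 1), pow_nonneg hr₀ (2 * m)]
  have hmin : Tendsto (fun p : ℕ × ℕ => min p.1 p.2) atTop atTop :=
    tendsto_atTop_atTop_of_monotone (fun _ _ hpq => min_le_min hpq.1 hpq.2)
      fun b => ⟨(b, b), by simp⟩
  have hlim := ((tendsto_pow_atTop_nhds_zero_of_lt_one (by positivity)
    (pow_lt_one₀ hr₀ hr₁ two_ne_zero)).comp hmin).const_mul (2 * K)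
  rw [mul_zero] at hlim
  exact squeeze_zero (fun p => B.nonneg _ (hgE p.1) _ (hhP p.2)) (fun p => hbound p.1 p.2) hlim

end Zigzag

section Picard

variable {g h : ℕ → α}

lemma IsContraPolyContraction.polyDist_picard_le (hPC : B.IsContraPolyContraction F π σ q)
    (hπ : 0 ≤ π) (hgE : ∀ n, g n ∈ B.E) (hhP : ∀ n, h n ∈ B.P) (hh : ∀ n, h n = F (g n))
    (hg : ∀ n, g (n + 1) = F (h n)) (n : ℕ) :
    B.polyDist q σ (g n) (h n) ≤ B.polyDist q σ (g 0) (h 0) * π ^ (2 * n) ∧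
      B.polyDist q σ (g (n + 1)) (h n) ≤ B.polyDist q σ (g 0) (h 0) * π ^ (2 * n + 1) := by
  have hadvance_g (n : ℕ) : B.polyDist q σ (g (n + 1)) (h n) ≤ π * B.polyDist q σ (g n) (h n) := by
    have := hPC.polyDist_le (hgE n) (hhP n)
    rwa [← hg n, ← hh n] at this
  have hadvance_h (n : ℕ) :
      B.polyDist q σ (g (n + 1)) (h (n + 1)) ≤ π * B.polyDist q σ (g (n + 1)) (h n) := by
    have := hPC.polyDist_le (hgE (n + 1)) (hhP n)
    rwa [← hg n, ← hh (n + 1)] at this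
  induction n with
  | zero => exact ⟨by simp, by simpa [mul_comm] using hadvance_g 0⟩
  | succ n ih =>
    have heven := (hadvance_h n).trans <| (mul_le_mul_of_nonneg_left ih.2 hπ).trans_eq
      (show _ = B.polyDist q σ (g 0) (h 0) * π ^ (2 * (n + 1)) by ring)
    exact ⟨heven,
      (hadvance_g (n + 1)).trans <| (mul_le_mul_of_nonneg_left heven hπ).trans_eq (by ring)⟩

lemma IsContraPolyContraction.tendsto_dist_picard (hPC : B.IsContraPolyContraction F π σ q)
    (hπ₀ : 0 ≤ π) (hπ₁ : π < 1) (hq : ∀ υ, ∀ e ∈ B.E, ∀ f ∈ B.P, 0 ≤ q υ e f) (hϱ : ϱ ≠ 0)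
    (hϱσ : ϱ ≤ σ) (hQ : 0 < Q) (hlb : ∀ e ∈ B.E, ∀ f ∈ B.P, Q ≤ q ϱ e f)
    (hgE : ∀ n, g n ∈ B.E) (hhP : ∀ n, h n ∈ B.P) (hh : ∀ n, h n = F (g n))
    (hg : ∀ n, g (n + 1) = F (h n)) :
    Tendsto (fun p : ℕ × ℕ => B.d (g p.1) (h p.2)) atTop (𝓝 0) := by
  have hS₀ := polyDist_nonneg (σ := σ) (hgE 0) (hhP 0) fun υ => hq υ _ (hgE 0) _ (hhP 0)
  have hdist {e f : α} (he : e ∈ B.E) (hf : f ∈ B.P) {k : ℕ}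
      (hk : B.polyDist q σ e f ≤ B.polyDist q σ (g 0) (h 0) * π ^ k) :=
    dist_le_of_polyDist_le he hf (fun υ => hq υ e he f hf) hϱ hϱσ hQ (hlb e he f hf) hS₀ hπ₀ hk
  have hdecay := hPC.polyDist_picard_le hπ₀ hgE hhP hh hg
  exact tendsto_dist_of_geometric hgE hhP (Real.rpow_nonneg (div_nonneg hS₀ hQ.le) _)
    (Real.rpow_nonneg hπ₀ _) (Real.rpow_lt_one hπ₀ hπ₁ (by positivity))
    (fun n => hdist (hgE n) (hhP n) (hdecay n).1)
    (fun n => hdist (hgE (n + 1)) (hhP n) (hdecay n).2)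

end Picard

end BipolarMS

theorem contravariant_polyContraction_fixedPoint_general {α : Type*} (B : BipolarMS α)
    (F : α → α) (hcontra : B.Contravariant F) (π : ℝ) (hπ : π ∈ Set.Ioo (0:ℝ) 1)
    (σ : ℕ) (q : ℕ → α → α → ℝ)
    (hq : ∀ υ, ∀ e ∈ B.E, ∀ f ∈ B.P, 0 ≤ q υ e f)
    (hPC : B.IsContraPolyContraction F π σ q)
    (hcomp : B.IsComplete) (hcont : B.ContraSeqContinuous F)
    (ϱ : ℕ) (hϱ1 : 1 ≤ ϱ) (hϱσ : ϱ ≤ σ) (Q : ℝ) (hQ : 0 < Q)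
    (hlb : ∀ e ∈ B.E, ∀ f ∈ B.P, Q ≤ q ϱ e f) :
    ∃! x, x ∈ B.E ∩ B.P ∧ F x = x := by
  obtain ⟨e₀, he₀⟩ := B.hE
  set g : ℕ → α := fun n => F^[2 * n] e₀
  have hg (n : ℕ) : g (n + 1) = F (F (g n)) := by
    simp only [g, mul_add, mul_one, Function.iterate_succ_apply']
  have hgE (n : ℕ) : g n ∈ B.E := by
    induction n with
    | zero => exact he₀
    | succ n ih => exact hg n ▸ hcontra.2 _ (hcontra.1 _ ih)
  have hhP (n : ℕ) : F (g n) ∈ B.P := hcontra.1 _ (hgE n)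
  have hϱ : ϱ ≠ 0 := by omega
  have hcauchy : Tendsto (fun p : ℕ × ℕ => B.d (g p.1) (F (g p.2))) atTop (𝓝 0) :=
    hPC.tendsto_dist_picard hπ.1.le hπ.2 hq hϱ hϱσ hQ hlb hgE hhP (fun _ => rfl) hg
  obtain ⟨x, hx, hgx, -⟩ := hcomp g (F ∘ g) hgE hhP hcauchy
  have hFx : F x = x :=
    B.eq_of_tendsto_dist ⟨hcontra.2 x hx.2, hcontra.1 x hx.1⟩ hx hgE hhP
      (hcont g (fun _ => x) hgE (fun _ => hx.2) hgx) (hcauchy.comp tendsto_atTop_diagonal) hgx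
  exact ⟨x, ⟨hx, hFx⟩, fun y ⟨hy, hFy⟩ =>
    hPC.eq_of_isFixedPt hπ.1.le hπ.2 hq hϱ hϱσ hQ hlb hy hx hFy hFx⟩

/-- contravariant polynomial contraction fixed point theorem. -/
theorem contravariant_polyContraction_fixedPoint {α : Type*} (B : BipolarMS α)
    (F : α → α) (hcontra : B.Contravariant F) (π : ℝ) (hπ : π ∈ Set.Ioo (0:ℝ) 1)
    (σ : ℕ) (hσ : 1 ≤ σ) (q : ℕ → α → α → ℝ)
    (hq : ∀ υ, ∀ e ∈ B.E, ∀ f ∈ B.P, 0 ≤ q υ e f)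
    (hPC : B.IsContraPolyContraction F π σ q)
    (hcomp : B.IsComplete) (hcont : B.ContraSeqContinuous F)
    (ϱ : ℕ) (hϱ1 : 1 ≤ ϱ) (hϱσ : ϱ ≤ σ) (Q : ℝ) (hQ : 0 < Q)
    (hlb : ∀ e ∈ B.E, ∀ f ∈ B.P, Q ≤ q ϱ e f) :
    ∃! x, x ∈ B.E ∩ B.P ∧ F x = x :=
  contravariant_polyContraction_fixedPoint_general B F hcontra π hπ σ q hq hPC hcomp hcont ϱ hϱ1 hϱσ
    Q hQ hlb
end

section
/- Let (E, P, ϑ) be a bipolar metric space and F : E ∪ P → E ∪ P a covariant polynomial contraction with coefficient functions q₀,…,q_σ and constant π ∈ (0,1). Suppose: (i) q₀ ≡ 0; (ii) for each υ ∈ {1,…,σ} there exists W_υ > 0 with q_υ(e, f) ≤ W_υ for all e ∈ E, f ∈ P; (iii) there exist ϱ ∈ {1,…,σ} and Q_ϱ > 0 with q_ϱ(e, f) ≥ Q_ϱ for all e ∈ E, f ∈ P. Then F is continuous, i.e., for any sequences {g_κ} ⊂ E, {h_κ} ⊂ P with ϑ(g_κ, h_κ) → 0, we have ϑ(F g_κ,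 F h_κ) → 0. -/
open Filter Topology MeasureTheory

/-!
Write `δ = ϑ(e, f)`. Chaining the lower bound `Q ≤ q_ϱ`, the contraction inequality and the upper
bounds `q_υ ≤ W_υ` (with `q₀ = 0`) gives `Q · ϑ(Fe, Ff)^ϱ ≤ π · ∑_{υ=1}^{σ} W_υ δ^υ`. The right-hand
side is a polynomial in `δ` without constant term, so it tends to `0` along any bisequence with
`δ → 0`, and then so does `ϑ(Fe, Ff)` because `ϱ ≥ 1`.
-/

open Finset

theorem tendsto_zero_of_tendsto_pow_zero {ι : Type*} {l : Filter ι} {x : ι → ℝ} {k : ℕ}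
    (hk : k ≠ 0) (hx : ∀ i, 0 ≤ x i) (h : Tendsto (fun i => x i ^ k) l (𝓝 0)) :
    Tendsto x l (𝓝 0) := by
  have hroot := h.rpow_const_nhds_zero (inv_pos.mpr (Nat.cast_pos.mpr (Nat.pos_of_ne_zero hk)))
  simpa only [Real.pow_rpow_inv_natCast (hx _) hk] using hroot

theorem coeff_mul_pow_le_sum_range {c : ℕ → ℝ} {t : ℝ} {k σ : ℕ} (hc : ∀ υ, 0 ≤ c υ)
    (ht : 0 ≤ t) (hk : k ≤ σ) :
    c k * t ^ k ≤ ∑ υ ∈ range (σ + 1), c υ * t ^ υ :=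
  single_le_sum (f := fun υ => c υ * t ^ υ) (fun υ _ => mul_nonneg (hc υ) (pow_nonneg ht υ))
    (mem_range.mpr (Nat.lt_succ_of_le hk))

theorem sum_range_mul_pow_le {c W : ℕ → ℝ} {t : ℝ} {σ : ℕ} (hc0 : c 0 = 0)
    (hcW : ∀ υ, 1 ≤ υ → υ ≤ σ → c υ ≤ W υ) (ht : 0 ≤ t) :
    ∑ υ ∈ range (σ + 1), c υ * t ^ υ ≤ ∑ υ ∈ range σ, W (υ + 1) * t ^ (υ + 1) := by
  rw [sum_range_succ', hc0, zero_mul, add_zero]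
  refine sum_le_sum fun υ hυ => mul_le_mul_of_nonneg_right ?_ (pow_nonneg ht _)
  exact hcW (υ + 1) le_add_self (mem_range.mp hυ)

theorem tendsto_sum_range_mul_pow_succ_zero {ι : Type*} {l : Filter ι} {δ : ι → ℝ}
    (W : ℕ → ℝ) (σ : ℕ) (hδ : Tendsto δ l (𝓝 0)) :
    Tendsto (fun i => ∑ υ ∈ range σ, W (υ + 1) * δ i ^ (υ + 1)) l (𝓝 0) := by
  have hcont : Continuous fun t : ℝ => ∑ υ ∈ range σ, W (υ + 1) * t ^ (υ + 1) := by fun_prop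
  simpa [Function.comp_def] using (hcont.tendsto 0).comp hδ

namespace BipolarMS

variable {α : Type*} {B : BipolarMS α} {F : α → α} {π : ℝ} {σ : ℕ} {q : ℕ → α → α → ℝ}

theorem IsPolyContraction.mul_dist_pow_le (hPC : B.IsPolyContraction F π σ q)
    (hcov : B.Covariant F) (hπ : 0 ≤ π) (hq : ∀ υ, ∀ e ∈ B.E, ∀ f ∈ B.P, 0 ≤ q υ e f)
    (hq0 : ∀ e ∈ B.E, ∀ f ∈ B.P, q 0 e f = 0) {W : ℕ → ℝ}
    (hub : ∀ υ, 1 ≤ υ → υ ≤ σ → ∀ e ∈ B.E, ∀ f ∈ B.P, q υ e f ≤ W υ)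
    {ϱ : ℕ} (hϱσ : ϱ ≤ σ) {Q : ℝ} (hlb : ∀ e ∈ B.E, ∀ f ∈ B.P, Q ≤ q ϱ e f)
    {e f : α} (he : e ∈ B.E) (hf : f ∈ B.P) :
    Q * B.d (F e) (F f) ^ ϱ ≤ π * ∑ υ ∈ range σ, W (υ + 1) * B.d e f ^ (υ + 1) := by
  have hFe := hcov.1 e he
  have hFf := hcov.2 f hf
  have hFd := B.nonneg _ hFe _ hFf
  calc Q * B.d (F e) (F f) ^ ϱ
      ≤ q ϱ (F e) (F f) * B.d (F e) (F f) ^ ϱ :=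
        mul_le_mul_of_nonneg_right (hlb _ hFe _ hFf) (pow_nonneg hFd ϱ)
    _ ≤ ∑ υ ∈ range (σ + 1), q υ (F e) (F f) * B.d (F e) (F f) ^ υ :=
        coeff_mul_pow_le_sum_range (fun υ => hq υ _ hFe _ hFf) hFd hϱσ
    _ ≤ π * ∑ υ ∈ range (σ + 1), q υ e f * B.d e f ^ υ := hPC e he f hf
    _ ≤ π * ∑ υ ∈ range σ, W (υ + 1) * B.d e f ^ (υ + 1) :=
        mul_le_mul_of_nonneg_left (sum_range_mul_pow_le (hq0 e he f hf)
          (fun υ h1 h2 => hub υ h1 h2 e he f hf) (B.nonneg e he f hf)) hπ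

end BipolarMS

theorem polyContraction_continuous_general {α : Type*} (B : BipolarMS α)
    (F : α → α) (hcov : B.Covariant F) (π : ℝ) (hπ : π ∈ Set.Ioo (0:ℝ) 1)
    (σ : ℕ) (q : ℕ → α → α → ℝ)
    (hq : ∀ υ, ∀ e ∈ B.E, ∀ f ∈ B.P, 0 ≤ q υ e f)
    (hPC : B.IsPolyContraction F π σ q)
    (hq0 : ∀ e ∈ B.E, ∀ f ∈ B.P, q 0 e f = 0)
    (W : ℕ → ℝ)
    (hub : ∀ υ, 1 ≤ υ → υ ≤ σ → ∀ e ∈ B.E, ∀ f ∈ B.P, q υ e f ≤ W υ)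
    (ϱ : ℕ) (hϱ1 : 1 ≤ ϱ) (hϱσ : ϱ ≤ σ) (Q : ℝ) (hQ : 0 < Q)
    (hlb : ∀ e ∈ B.E, ∀ f ∈ B.P, Q ≤ q ϱ e f) :
    B.SeqContinuous F := by
  intro g h hg hh hd
  have hFd : ∀ n, 0 ≤ B.d (F (g n)) (F (h n)) :=
    fun n => B.nonneg _ (hcov.1 _ (hg n)) _ (hcov.2 _ (hh n))
  have hbound : Tendsto (fun n => π * ∑ υ ∈ range σ, W (υ + 1) * B.d (g n) (h n) ^ (υ + 1))
      atTop (𝓝 0) := by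
    simpa using (tendsto_sum_range_mul_pow_succ_zero W σ hd).const_mul π
  have hscaled : Tendsto (fun n => Q * B.d (F (g n)) (F (h n)) ^ ϱ) atTop (𝓝 0) :=
    squeeze_zero (fun n => mul_nonneg hQ.le (pow_nonneg (hFd n) ϱ))
      (fun n => hPC.mul_dist_pow_le hcov hπ.1.le hq hq0 hub hϱσ hlb (hg n) (hh n)) hbound
  refine tendsto_zero_of_tendsto_pow_zero (Nat.one_le_iff_ne_zero.mp hϱ1) hFd ?_
  simpa [← mul_assoc, inv_mul_cancel₀ hQ.ne'] using hscaled.const_mul Q⁻¹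

/-- bounded coefficients force continuity of a polynomial contraction. -/
theorem polyContraction_continuous {α : Type*} (B : BipolarMS α)
    (F : α → α) (hcov : B.Covariant F) (π : ℝ) (hπ : π ∈ Set.Ioo (0:ℝ) 1)
    (σ : ℕ) (hσ : 1 ≤ σ) (q : ℕ → α → α → ℝ)
    (hq : ∀ υ, ∀ e ∈ B.E, ∀ f ∈ B.P, 0 ≤ q υ e f)
    (hPC : B.IsPolyContraction F π σ q)
    (hq0 : ∀ e ∈ B.E, ∀ f ∈ B.P, q 0 e f = 0)
    (W : ℕ → ℝ) (hW : ∀ υ, 1 ≤ υ → υ ≤ σ → 0 < W υ)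
    (hub : ∀ υ, 1 ≤ υ → υ ≤ σ → ∀ e ∈ B.E, ∀ f ∈ B.P, q υ e f ≤ W υ)
    (ϱ : ℕ) (hϱ1 : 1 ≤ ϱ) (hϱσ : ϱ ≤ σ) (Q : ℝ) (hQ : 0 < Q)
    (hlb : ∀ e ∈ B.E, ∀ f ∈ B.P, Q ≤ q ϱ e f) :
    B.SeqContinuous F :=
  polyContraction_continuous_general B F hcov π hπ σ q hq hPC hq0 W hub ϱ hϱ1 hϱσ Q hQ hlb
end

section
/- Under the hypotheses of the covariant polynomial contraction theorem (complete bipolar metric space, continuous covariant polynomial contraction F with q_ϱ bounded below by Q_ϱ > 0 for some ϱ ≥ 1), the fixed point of F is unique: if g and g* are both fixed points of F with ϑ(g, g*) > 0, a contradiction with π ∈ (0,1) follows from the inequality Σ_{υ=0}^{σ} q_υ(g, g*)·ϑ(g, g*)^υ ≤ π·Σ_{υ=0}^{σ} q_υ(g, g*)·ϑ(g, g*)^υ together with Σ_{υ=0}^{σ} q_υ(g, g*)·ϑ(g, g*)^υ ≥ Q_ϱ·ϑ(g, g*)^ϱ > 0. -/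
open Filter Topology MeasureTheory

open Finset Function

theorem mul_pow_le_sum_range_mul_pow {c : ℕ → ℝ} {x Q : ℝ} {ϱ σ : ℕ}
    (hc : ∀ υ, 0 ≤ c υ) (hx : 0 ≤ x) (hϱσ : ϱ ≤ σ) (hQc : Q ≤ c ϱ) :
    Q * x ^ ϱ ≤ ∑ υ ∈ range (σ + 1), c υ * x ^ υ :=
  calc Q * x ^ ϱ ≤ c ϱ * x ^ ϱ := mul_le_mul_of_nonneg_right hQc (pow_nonneg hx ϱ)
    _ ≤ ∑ υ ∈ range (σ + 1), c υ * x ^ υ :=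
      single_le_sum (fun υ _ => mul_nonneg (hc υ) (pow_nonneg hx υ))
        (mem_range.mpr (Nat.lt_succ_of_le hϱσ))

theorem eq_zero_of_sum_range_mul_pow_le_mul {c : ℕ → ℝ} {x Q π : ℝ} {ϱ σ : ℕ}
    (hc : ∀ υ, 0 ≤ c υ) (hx : 0 ≤ x) (hϱσ : ϱ ≤ σ) (hQ : 0 < Q) (hQc : Q ≤ c ϱ) (hπ : π < 1)
    (h : ∑ υ ∈ range (σ + 1), c υ * x ^ υ ≤ π * ∑ υ ∈ range (σ + 1), c υ * x ^ υ) :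
    x = 0 := by
  have hlow := mul_pow_le_sum_range_mul_pow hc hx hϱσ hQc
  have hsum_nonpos : ∑ υ ∈ range (σ + 1), c υ * x ^ υ ≤ 0 := by nlinarith
  have hpow : x ^ ϱ = 0 :=
    le_antisymm (nonpos_of_mul_nonpos_right (hlow.trans hsum_nonpos) hQ) (pow_nonneg hx ϱ)
  exact eq_zero_of_pow_eq_zero hpow

namespace BipolarMS.IsPolyContraction

variable {α : Type*} {B : BipolarMS α} {F : α → α} {π : ℝ} {σ : ℕ} {q : ℕ → α → α → ℝ}

theorem dist_eq_zero_of_isFixedPt (hPC : B.IsPolyContraction F π σ q) (hπ : π < 1)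
    {ϱ : ℕ} (hϱσ : ϱ ≤ σ) {Q : ℝ} (hQ : 0 < Q) {e f : α} (he : e ∈ B.E) (hf : f ∈ B.P)
    (hq : ∀ υ, 0 ≤ q υ e f) (hQq : Q ≤ q ϱ e f) (hFe : IsFixedPt F e) (hFf : IsFixedPt F f) :
    B.d e f = 0 := by
  have hcontr := hPC e he f hf
  rw [hFe, hFf] at hcontr
  exact eq_zero_of_sum_range_mul_pow_le_mul hq (B.nonneg e he f hf) hϱσ hQ hQq hπ hcontr

end BipolarMS.IsPolyContraction

theorem polyContraction_fixedPoint_unique_general {α : Type*} (B : BipolarMS α)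
    (F : α → α) (π : ℝ) (hπ : π ∈ Set.Ioo (0:ℝ) 1)
    (σ : ℕ) (q : ℕ → α → α → ℝ)
    (hq : ∀ υ, ∀ e ∈ B.E, ∀ f ∈ B.P, 0 ≤ q υ e f)
    (hPC : B.IsPolyContraction F π σ q)
    (ϱ : ℕ) (hϱσ : ϱ ≤ σ) (Q : ℝ) (hQ : 0 < Q)
    (hlb : ∀ e ∈ B.E, ∀ f ∈ B.P, Q ≤ q ϱ e f)
    (g gstar : α) (hgmem : g ∈ B.E ∩ B.P) (hgstarmem : gstar ∈ B.E ∩ B.P)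
    (hg : F g = g) (hgstar : F gstar = gstar) :
    g = gstar :=
  (B.eq_iff g hgmem gstar hgstarmem).mp <|
    hPC.dist_eq_zero_of_isFixedPt hπ.2 hϱσ hQ hgmem.1 hgstarmem.2
      (fun υ => hq υ g hgmem.1 gstar hgstarmem.2) (hlb g hgmem.1 gstar hgstarmem.2) hg hgstar

/-- uniqueness of the fixed point of a covariant polynomial
contraction. -/
theorem polyContraction_fixedPoint_unique {α : Type*} (B : BipolarMS α)
    (F : α → α) (hcov : B.Covariant F) (π : ℝ) (hπ : π ∈ Set.Ioo (0:ℝ) 1)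
    (σ : ℕ) (hσ : 1 ≤ σ) (q : ℕ → α → α → ℝ)
    (hq : ∀ υ, ∀ e ∈ B.E, ∀ f ∈ B.P, 0 ≤ q υ e f)
    (hPC : B.IsPolyContraction F π σ q)
    (hcomp : B.IsComplete) (hcont : B.SeqContinuous F)
    (ϱ : ℕ) (hϱ1 : 1 ≤ ϱ) (hϱσ : ϱ ≤ σ) (Q : ℝ) (hQ : 0 < Q)
    (hlb : ∀ e ∈ B.E, ∀ f ∈ B.P, Q ≤ q ϱ e f)
    (g gstar : α) (hgmem : g ∈ B.E ∩ B.P) (hgstarmem : gstar ∈ B.E ∩ B.P)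
    (hg : F g = g) (hgstar : F gstar = gstar) :
    g = gstar :=
  polyContraction_fixedPoint_unique_general B F π hπ σ q hq hPC ϱ hϱσ Q hQ hlb g gstar hgmem
    hgstarmem hg hgstar
end
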